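/- arXiv:1711.02246 — 3 statements merged into one kernel-verified Lean document; each statement's English description precedes it below -/
import Mathlib

section
/- In a CFG, if a node v is cycle-inducing then there exists a cycle that contains v but does not contain fppd(v). -/
namespace Slicing

/-- A path is a nonempty list of nodes, consecutive ones related by `succ`,
starting at `v` and ending at `v'`. -/
def IsPath {V : Type} (succ : V → V → Prop) (p : List V) (v v' : V) : Prop :=
  p.Chain' succ ∧ p.head? = some v ∧ p.getLast? = some v'

/-- A control-flow graph: an edge relation and an `End` node with no successors,
reachable from every node. -/
structure CFG (V : Type) where
  succ : V → V → Prop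
  End : V
  end_no_succ : ∀ w, ¬ succ End w
  reach_end : ∀ v, ∃ p, IsPath succ p v End

variable {V : Type}

/-- `v1` postdominates `v`. -/
def PD (G : CFG V) (v v1 : V) : Prop :=
  ∀ p, IsPath G.succ p v G.End → v1 ∈ p

/-- `v1` is a proper postdominator of `v`. -/
def ProperPD (G : CFG V) (v v1 : V) : Prop :=
  PD G v v1 ∧ v1 ≠ v

/-- `v1` is a first proper postdominator of `v`: every path from `v` to any other
proper postdominator of `v` contains `v1`. -/
def IsFPPD (G : CFG V) (v v1 : V) : Prop :=
  ProperPD G v v1 ∧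
    ∀ v2, ProperPD G v v2 → v2 ≠ v1 → ∀ p, IsPath G.succ p v v2 → v1 ∈ p

/-- Maximum number of edges of an acyclic path from `v` to `v'`. -/
noncomputable def LAP (G : CFG V) (v v' : V) : ℕ :=
  sSup {n | ∃ p, IsPath G.succ p v v' ∧ p.Nodup ∧ p.length = n + 1}

/-- A node is cycle-inducing if, with `v'` its first proper postdominator,
some successor `vi` of `v` satisfies `LAP vi v' ≥ LAP v v'`. -/
def CycleInducing (G : CFG V) (v : V) : Prop :=
  ∃ v', IsFPPD G v v' ∧ ∃ vi, G.succ v vi ∧ LAP G v v' ≤ LAP G vi v'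

/-- `v` stays outside `Q` until `v'`: every path from `v` to `v'` in which `v'`
occurs only at the final position contains no node of `Q` except possibly `v'`. -/
def StaysOutside (G : CFG V) (Q : Set V) (v v' : V) : Prop :=
  ∀ p, IsPath G.succ p v v' → v' ∉ p.dropLast → ∀ w ∈ p, w ∈ Q → w = v'

/-- `v2` is data dependent on `v1`. -/
def DataDep {Var : Type} (G : CFG V) (Def Use : V → Set Var) (v1 v2 : V) : Prop :=
  ∃ x, x ∈ Use v2 ∧ x ∈ Def v1 ∧
    ∃ p, IsPath G.succ p v1 v2 ∧ 2 ≤ p.length ∧ ∀ w ∈ p.tail.dropLast, x ∉ Def w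

/-- `Q` is closed under data dependence. -/
def ClosedDD {Var : Type} (G : CFG V) (Def Use : V → Set Var) (Q : Set V) : Prop :=
  ∀ v1 v2, v2 ∈ Q → DataDep G Def Use v1 v2 → v1 ∈ Q

/-- The `Q`-relevant variables at `v`. -/
def rv {Var : Type} (G : CFG V) (Def Use : V → Set Var) (Q : Set V) (v : V) : Set Var :=
  {x | ∃ v' ∈ Q, x ∈ Use v' ∧
    ∃ p, IsPath G.succ p v v' ∧ p.Nodup ∧ ∀ w ∈ p, w ≠ v' → x ∉ Def w}

/-- `v'` is a next visible in `Q` of `v`. -/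
def IsNextVisible (G : CFG V) (Q : Set V) (v v' : V) : Prop :=
  (v' ∈ Q ∨ v' = G.End) ∧
    ∀ u, (u ∈ Q ∨ u = G.End) → ∀ p, IsPath G.succ p v u → v' ∈ p

/-- `Q` provides next visibles. -/
def ProvidesNextVisibles (G : CFG V) (Q : Set V) : Prop :=
  ∀ v, ∃ v', IsNextVisible G Q v v'

/-- A weak slice set provides next visibles and is closed under data dependence. -/
def WeakSliceSet {Var : Type} (G : CFG V) (Def Use : V → Set Var) (Q : Set V) : Prop :=
  ProvidesNextVisibles G Q ∧ ClosedDD G Def Use Q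

end Slicing

/-!
Take a longest acyclic path `q` from `vi` to `v'`; it exists because `v'` properly postdominates
`v`. If `v ∉ q`, then `v :: q` is an acyclic path from `v` to `v'` longer than
`LAP G vi v' ≥ LAP G v v'`, which is absurd. So `v ∈ q`, and the edge `v → vi` followed by `q` up
to `v` is a cycle; it misses `v'`, which occurs in the acyclic path `q` only at its end.
-/

namespace Slicing

namespace IsPath

variable {V : Type} {succ : V → V → Prop} {p : List V} {v v' : V}

lemma ne_nil (h : IsPath succ p v v') : p ≠ [] := by
  rintro rfl
  simp [IsPath] at h

lemma length_pos (h : IsPath succ p v v') : 0 < p.length :=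
  List.length_pos_iff.mpr h.ne_nil

lemma singleton (v : V) : IsPath succ [v] v v :=
  ⟨List.isChain_singleton v, rfl, rfl⟩

lemma cons {w : V} (hs : succ v w) (h : IsPath succ p w v') : IsPath succ (v :: p) v v' := by
  obtain ⟨hc, hh, hl⟩ := h
  refine ⟨List.isChain_cons.mpr ⟨fun y hy => ?_, hc⟩, rfl, ?_⟩
  · rw [hh, Option.mem_some_iff] at hy
    exact hy ▸ hs
  · rw [List.getLast?_cons, hl]
    rfl

lemma takeUntil {s t : List V} {a : V} (h : IsPath succ (s ++ a :: t) v v') :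
    IsPath succ (s ++ [a]) v a := by
  obtain ⟨hc, hh, -⟩ := h
  refine ⟨hc.prefix ⟨t, by simp⟩, ?_, List.getLast?_concat⟩
  cases s <;> simpa using hh

lemma dropUntil {s t : List V} {a : V} (h : IsPath succ (s ++ a :: t) v v') :
    IsPath succ (a :: t) a v' := by
  obtain ⟨hc, -, hl⟩ := h
  refine ⟨hc.suffix ⟨s, rfl⟩, rfl, ?_⟩
  rwa [List.getLast?_append_of_ne_nil _ (List.cons_ne_nil a t)] at hl

lemma exists_nodup (h : IsPath succ p v v') : ∃ q, IsPath succ q v v' ∧ q.Nodup := by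
  induction p generalizing v with
  | nil => exact absurd rfl h.ne_nil
  | cons a rest ih =>
    obtain ⟨hc, hh, hl⟩ := h
    obtain rfl : a = v := Option.some.inj hh
    rcases rest with _ | ⟨b, rest⟩
    · obtain rfl : a = v' := Option.some.inj hl
      exact ⟨[a], singleton a, List.nodup_singleton a⟩
    obtain ⟨hab, hc⟩ := List.isChain_cons_cons.mp hc
    obtain ⟨q, hq, hqnd⟩ := ih ⟨hc, rfl, by rwa [List.getLast?_cons_cons] at hl⟩
    by_cases ha : a ∈ q
    · obtain ⟨s, t, rfl⟩ := List.append_of_mem ha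
      exact ⟨a :: t, hq.dropUntil, hqnd.sublist (List.sublist_append_right s _)⟩
    · exact ⟨a :: q, hq.cons hab, List.nodup_cons.mpr ⟨ha, hqnd⟩⟩

lemma exists_cycle_of_mem_of_succ {w : V} {q : List V} (hs : succ v w) (hq : IsPath succ q w v')
    (hqnd : q.Nodup) (hv : v ∈ q) (hne : v' ≠ v) :
    ∃ p, IsPath succ p v v ∧ 2 ≤ p.length ∧ v ∈ p ∧ v' ∉ p := by
  obtain ⟨s, t, rfl⟩ := List.append_of_mem hv
  refine ⟨v :: (s ++ [v]), hq.takeUntil.cons hs, by simp, List.mem_cons_self, ?_⟩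
  have hv't : v' ∈ v :: t := List.mem_of_getLast? hq.dropUntil.2.2
  have hv's : v' ∉ s := fun hs' => (List.nodup_append.mp hqnd).2.2 v' hs' v' hv't rfl
  simp only [List.mem_cons, List.mem_append, List.not_mem_nil, or_false, not_or]
  exact ⟨hne, hv's, hne⟩

end IsPath

variable {V : Type}

lemma ProperPD.exists_isPath_of_succ {G : CFG V} {v v' w : V} (h : ProperPD G v v')
    (hs : G.succ v w) : ∃ p, IsPath G.succ p w v' := by
  obtain ⟨p, hp⟩ := G.reach_end w
  have hv' : v' ∈ p := (List.mem_cons.mp (h.1 _ (hp.cons hs))).resolve_left h.2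
  obtain ⟨s, t, rfl⟩ := List.append_of_mem hv'
  exact ⟨_, hp.takeUntil⟩

section LAP

/-- Edge counts of acyclic paths from `w` to `v'`, whose supremum is `LAP G w v'`. -/
def acyclicPathLengths (G : CFG V) (w v' : V) : Set ℕ :=
  {n | ∃ p, IsPath G.succ p w v' ∧ p.Nodup ∧ p.length = n + 1}

variable [Fintype V] {G : CFG V} {p : List V} {w v' : V}

lemma bddAbove_acyclicPathLengths (G : CFG V) (w v' : V) :
    BddAbove (acyclicPathLengths G w v') :=
  ⟨Fintype.card V, fun _ ⟨_, _, hnd, hlen⟩ => by have := hnd.length_le_card; omega⟩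

lemma length_le_LAP_add_one (hp : IsPath G.succ p w v') (hnd : p.Nodup) :
    p.length ≤ LAP G w v' + 1 := by
  have hlen : p.length = p.length - 1 + 1 := (Nat.sub_add_cancel hp.length_pos).symm
  rw [hlen, Nat.add_le_add_iff_right]
  exact le_csSup (bddAbove_acyclicPathLengths G w v') ⟨p, hp, hnd, hlen⟩

lemma exists_isPath_length_eq_LAP (hp : IsPath G.succ p w v') :
    ∃ q, IsPath G.succ q w v' ∧ q.Nodup ∧ q.length = LAP G w v' + 1 := by
  obtain ⟨q, hq, hqnd⟩ := hp.exists_nodup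
  have hmem : q.length - 1 ∈ acyclicPathLengths G w v' :=
    ⟨q, hq, hqnd, (Nat.sub_add_cancel hq.length_pos).symm⟩
  exact Nat.sSup_mem ⟨_, hmem⟩ (bddAbove_acyclicPathLengths G w v')

end LAP

/-- If `v` is cycle-inducing (witnessed by its first proper postdominator `v'` and a
successor `vi` with `LAP vi v' ≥ LAP v v'`), then there is a cycle containing `v`
but not `v'`. -/
theorem cycle_inducing_gives_cycle {V : Type} [Fintype V] (G : CFG V)
    (v v' vi : V) (hf : IsFPPD G v v')
    (hsucc : G.succ v vi) (hlap : LAP G v v' ≤ LAP G vi v') :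
    ∃ u p, IsPath G.succ p u u ∧ 2 ≤ p.length ∧ v ∈ p ∧ v' ∉ p := by
  obtain ⟨hppd, -⟩ := hf
  obtain ⟨p, hp⟩ := hppd.exists_isPath_of_succ hsucc
  obtain ⟨q, hq, hqnd, hqlen⟩ := exists_isPath_length_eq_LAP hp
  by_cases hv : v ∈ q
  · exact ⟨v, hq.exists_cycle_of_mem_of_succ hsucc hqnd hv hppd.2⟩
  · have hlong := length_le_LAP_add_one (hq.cons hsucc) (List.nodup_cons.mpr ⟨hv, hqnd⟩)
    rw [List.length_cons] at hlong
    omega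

end Slicing
end

section
/- In a CFG, every cycle contains at least one node which is cycle-inducing. -/
/-!
Write `h v = LAP v End`. If `F` postdominates `v`, then `h v = LAP v F + h F`: a longest acyclic
path from `v` to `End` passes through `F` and splits there, and conversely longest acyclic paths
`v ⟶ F` and `F ⟶ End` concatenate to an acyclic path, since every node before `F` on the first
is postdominated by `F` while the second never comes back to `F`. The first proper postdominator
`F` of `v` also postdominates every successor `y` of `v`, so if `v` is not cycle-inducing then
`h y = LAP y F + h F < LAP v F + h F = h v`. Thus `h` strictly decreases along every edge leaving
a non-cycle-inducing node, and no cycle can consist of such nodes only.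
-/

namespace Slicing

section Paths

variable {V : Type} {succ : V → V → Prop} {p q a b : List V} {u v w : V}

theorem isPath_append_cons_iff :
    IsPath succ (a ++ w :: b) u v ↔ IsPath succ (a ++ [w]) u w ∧ IsPath succ (w :: b) w v := by
  unfold IsPath List.Chain'
  rw [List.isChain_split, List.getLast?_append_cons, List.getLast?_concat, List.head?_append,
    List.head?_append]
  cases a <;> simp <;> tauto

theorem IsPath.eq_cons_tail (hp : IsPath succ p u v) : p = u :: p.tail := by
  obtain ⟨t, rfl⟩ := List.head?_eq_some_iff.mp hp.2.1
  rfl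

theorem IsPath.eq_dropLast_append (hp : IsPath succ p u v) : p = p.dropLast ++ [v] :=
  (List.dropLast_append_getLast? v hp.2.2).symm

theorem IsPath.dropLast_append (hp : IsPath succ p u v) (hq : IsPath succ q v w) :
    IsPath succ (p.dropLast ++ q) u w := by
  rw [hp.eq_dropLast_append] at hp
  have hq_cons := hq.eq_cons_tail
  rw [hq_cons] at hq ⊢
  exact isPath_append_cons_iff.mpr ⟨hp, hq⟩

theorem exists_eq_append_cons_append_cons_of_not_nodup (h : ¬ p.Nodup) :
    ∃ a b c w, p = a ++ w :: b ++ w :: c := by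
  obtain ⟨w, hw⟩ : ∃ w, [w, w].Sublist p := by
    simpa [List.nodup_iff_sublist] using h
  obtain ⟨r₁, r₂, rfl, hw₁, hw₂⟩ := List.cons_sublist_iff.mp hw
  obtain ⟨a, b, rfl⟩ := List.append_of_mem hw₁
  obtain ⟨c, d, rfl⟩ := List.append_of_mem (List.singleton_sublist.mp hw₂)
  exact ⟨a, b ++ c, d, w, by simp⟩

theorem IsPath.exists_nodup_s4 (hp : IsPath succ p u v) : ∃ q, IsPath succ q u v ∧ q.Nodup := by
  induction hn : p.length using Nat.strong_induction_on generalizing p with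
  | _ n ih =>
  by_cases hnd : p.Nodup
  · exact ⟨p, hp, hnd⟩
  obtain ⟨a, b, c, w, rfl⟩ := exists_eq_append_cons_append_cons_of_not_nodup hnd
  rw [List.append_assoc, List.cons_append, isPath_append_cons_iff, ← List.cons_append,
    isPath_append_cons_iff (a := w :: b)] at hp
  have hshort : IsPath succ (a ++ w :: c) u v := isPath_append_cons_iff.mpr ⟨hp.1, hp.2.2⟩
  exact ih _ (by simp [← hn]) hshort rfl

theorem IsPath.not_mem_dropLast (hp : IsPath succ p u v) (hnd : p.Nodup) : v ∉ p.dropLast := by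
  rw [hp.eq_dropLast_append, List.nodup_append] at hnd
  exact fun hv => hnd.2.2 v hv v (List.mem_singleton_self v) rfl

theorem IsPath.not_mem_tail (hp : IsPath succ p u v) (hnd : p.Nodup) : u ∉ p.tail := by
  rw [hp.eq_cons_tail, List.nodup_cons] at hnd
  exact hnd.1

theorem IsPath.lt_of_forall_succ_lt {β : Type} [Preorder β] {f : V → β}
    (hp : IsPath succ p u v) (hlen : 2 ≤ p.length) (hf : ∀ a ∈ p, ∀ b, succ a b → f b < f a) :
    f v < f u := by
  have hv : v ∈ p.tail := by
    have hne : p.dropLast ≠ [] := List.ne_nil_of_length_pos (by simp; omega)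
    rw [hp.eq_dropLast_append, List.tail_append_of_ne_nil hne]
    exact List.mem_append_right _ (List.mem_singleton_self v)
  have hchain : (p.map f).IsChain (· > ·) :=
    (List.isChain_map f).mpr (hp.1.imp_of_mem_imp fun a b ha _ hab => hf a ha b hab)
  rw [List.isChain_iff_pairwise, hp.eq_cons_tail, List.map_cons, List.pairwise_cons] at hchain
  exact hchain.1 (f v) (List.mem_map_of_mem hv)

end Paths

section CFG

variable {V : Type} (G : CFG V) {p : List V} {u v w F : V}

theorem pd_end (v : V) : PD G v G.End :=
  fun _ hp => List.mem_of_getLast? hp.2.2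

theorem PD.of_isPath (hF : PD G u F) (hp : IsPath G.succ p u v) (hFp : F ∉ p.dropLast) :
    PD G v F := by
  intro q hq
  have hF' := hF _ (hp.dropLast_append hq)
  rw [List.mem_append] at hF'
  exact hF'.resolve_left hFp

theorem PD.exists_isPath (hF : PD G v F) : ∃ p, IsPath G.succ p v F := by
  obtain ⟨p, hp⟩ := G.reach_end v
  obtain ⟨a, b, rfl⟩ := List.append_of_mem (hF p hp)
  exact ⟨a ++ [F], (isPath_append_cons_iff.mp hp).1⟩

theorem exists_isFPPD (hv : v ≠ G.End) : ∃ F, IsFPPD G v F := by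
  classical
  obtain ⟨q, hq, hnd⟩ := (G.reach_end v).choose_spec.exists_nodup_s4
  obtain ⟨F, hF⟩ : ∃ F, q.find? (fun w => decide (ProperPD G v w)) = some F := by
    refine Option.isSome_iff_exists.mp (List.find?_isSome.mpr ⟨G.End, ?_, ?_⟩)
    · exact List.mem_of_getLast? hq.2.2
    · exact decide_eq_true ⟨pd_end G v, Ne.symm hv⟩
  obtain ⟨hFv, a, b, rfl, ha⟩ := List.find?_eq_some_iff_append.mp hF
  have hFv := of_decide_eq_true hFv
  refine ⟨F, hFv, fun v₂ hv₂ hv₂F r hr => ?_⟩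
  obtain ⟨c, d, hb⟩ : ∃ c d, b = c ++ v₂ :: d := by
    refine List.append_of_mem ?_
    rcases List.mem_append.mp (hv₂.1 _ hq) with h | h
    · simpa [decide_eq_true hv₂] using ha v₂ h
    · exact (List.mem_cons.mp h).resolve_left hv₂F
  subst hb
  -- `v₂` lies on `q` after `F`, and the rest of `q` from `v₂` to `End` avoids `F`
  have hrest : IsPath G.succ (v₂ :: d) v₂ G.End := by
    rw [show a ++ F :: (c ++ v₂ :: d) = a ++ F :: c ++ v₂ :: d by simp] at hq
    exact (isPath_append_cons_iff.mp hq).2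
  have hFrest : F ∉ v₂ :: d := fun h =>
    (List.nodup_cons.mp (hnd.sublist (List.sublist_append_right a _))).1
      (List.mem_append_right c h)
  have hFr := hFv.1 _ (hr.dropLast_append hrest)
  exact List.dropLast_subset r ((List.mem_append.mp hFr).resolve_right hFrest)

def acyclicLengths (u v : V) : Set ℕ :=
  {n | ∃ p, IsPath G.succ p u v ∧ p.Nodup ∧ p.length = n + 1}

theorem IsPath.length_sub_one_mem_acyclicLengths (hp : IsPath G.succ p u v) (hnd : p.Nodup) :
    p.length - 1 ∈ acyclicLengths G u v :=
  ⟨p, hp, hnd, by rw [hp.eq_cons_tail, List.length_cons, Nat.add_sub_cancel]⟩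

variable [Fintype V]

theorem acyclicLengths_bddAbove (u v : V) : BddAbove (acyclicLengths G u v) :=
  ⟨Fintype.card V, fun _ ⟨_, _, hnd, hlen⟩ => by have := hnd.length_le_card; omega⟩

theorem length_le_lap (hp : IsPath G.succ p u v) (hnd : p.Nodup) : p.length ≤ LAP G u v + 1 := by
  have : p.length - 1 ≤ LAP G u v :=
    le_csSup (acyclicLengths_bddAbove G u v) (hp.length_sub_one_mem_acyclicLengths G hnd)
  omega

theorem IsPath.exists_nodup_length_eq_lap (hp : IsPath G.succ p u v) :
    ∃ q, IsPath G.succ q u v ∧ q.Nodup ∧ q.length = LAP G u v + 1 := by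
  obtain ⟨q, hq, hnd⟩ := hp.exists_nodup_s4
  exact Nat.sSup_mem ⟨_, hq.length_sub_one_mem_acyclicLengths G hnd⟩
    (acyclicLengths_bddAbove G u v)

theorem lap_end_le_add (hF : PD G v F) : LAP G v G.End ≤ LAP G v F + LAP G F G.End := by
  obtain ⟨p, hp, hnd, hlen⟩ := (G.reach_end v).choose_spec.exists_nodup_length_eq_lap
  obtain ⟨a, b, rfl⟩ := List.append_of_mem (hF p hp)
  obtain ⟨hva, hFb⟩ := isPath_append_cons_iff.mp hp
  have hnda : (a ++ [F]).Nodup := hnd.sublist (by simp)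
  have hndb : (F :: b).Nodup := hnd.sublist (List.sublist_append_right a _)
  have hle_a := length_le_lap G hva hnda
  have hle_b := length_le_lap G hFb hndb
  simp only [List.length_append, List.length_cons, List.length_nil] at hlen hle_a hle_b
  omega

theorem add_le_lap_end (hF : PD G v F) : LAP G v F + LAP G F G.End ≤ LAP G v G.End := by
  obtain ⟨p, hp, hndp, hlenp⟩ := hF.exists_isPath.choose_spec.exists_nodup_length_eq_lap
  obtain ⟨q, hq, hndq, hlenq⟩ := (G.reach_end F).choose_spec.exists_nodup_length_eq_lap
  have hnd : (p.dropLast ++ q).Nodup := by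
    refine List.nodup_append.mpr ⟨hndp.sublist (List.dropLast_sublist p), hndq, ?_⟩
    rintro w hwp _ hwq rfl
    -- `F` postdominates `w`, yet the part of `q` after `w` is a path to `End` avoiding `F`
    have hFp := hp.not_mem_dropLast hndp
    obtain ⟨a, b, hpw⟩ := List.append_of_mem hwp
    rw [hp.eq_dropLast_append, hpw, List.append_assoc, List.cons_append,
      isPath_append_cons_iff] at hp
    have hwF : PD G w F := hF.of_isPath G hp.1 (by
      rw [List.dropLast_concat]; exact fun h => hFp (hpw ▸ List.mem_append_left _ h))
    have hwq : w ∈ q.tail := by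
      rw [hq.eq_cons_tail] at hwq
      exact (List.mem_cons.mp hwq).resolve_left (by rintro rfl; exact hFp hwp)
    obtain ⟨c, d, hqw⟩ := List.append_of_mem hwq
    have hrest := hq
    rw [hq.eq_cons_tail, hqw, ← List.cons_append, isPath_append_cons_iff] at hrest
    exact hq.not_mem_tail hndq (by rw [hqw]; exact List.mem_append_right _ (hwF _ hrest.2))
  have hle := length_le_lap G (hp.dropLast_append hq) hnd
  have hp_len : p.length = p.dropLast.length + 1 := by rw [hp.eq_dropLast_append]; simp
  rw [List.length_append] at hle
  omega

theorem lap_end_eq_add (hF : PD G v F) : LAP G v G.End = LAP G v F + LAP G F G.End :=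
  (lap_end_le_add G hF).antisymm (add_le_lap_end G hF)

theorem lap_end_lt_of_succ (huv : G.succ u v) (hu : ¬ CycleInducing G u) :
    LAP G v G.End < LAP G u G.End := by
  obtain ⟨F, hF⟩ := exists_isFPPD G fun h => G.end_no_succ v (h ▸ huv)
  have hvF : PD G v F :=
    hF.1.1.of_isPath G (p := [u, v]) ⟨List.isChain_pair.mpr huv, rfl, rfl⟩ (by simpa using hF.1.2)
  have hlt : LAP G v F < LAP G u F := not_le.mp fun hle => hu ⟨F, hF, v, huv, hle⟩
  rw [lap_end_eq_add G hvF, lap_end_eq_add G hF.1.1]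
  omega

end CFG

/-- Every cycle contains at least one cycle-inducing node. -/
theorem cycle_contains_cycle_inducing {V : Type} [Fintype V] (G : CFG V)
    (u : V) (p : List V) (hp : IsPath G.succ p u u) (hlen : 2 ≤ p.length) :
    ∃ w ∈ p, CycleInducing G w := by
  by_contra! h
  exact lt_irrefl _ <|
    hp.lt_of_forall_succ_lt hlen fun a ha b hab => lap_end_lt_of_succ G hab (h a ha)

end Slicing
end

section
/- In a labelled CFG, if v' postdominates v, v stays outside Q until v', and Q is closed under data dependence, then rv(Q,v) = rv(Q,v'). -/
/-
Acyclicity of the witnesses in `rv` is inessential: any `x`-clear path to a use of `x` in `Q` can be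
shortened to an acyclic one. Every path from `v` into `Q` passes through `v'`, since it extends to
`End` and the part before the first `v'` avoids `Q`; its tail from `v'` gives `rv(Q,v) ⊆ rv(Q,v')`.
Conversely, prefix a witness for `v'` with a path from `v` to `v'` that avoids `Q`. If `x` were
defined on the combined path, the use would be data dependent on its last definition, which
therefore lies in `Q`, hence is `v'` itself; but the witness for `v'` forbids that.
-/

theorem List.exists_eq_append_cons_append_cons_of_not_nodup {α : Type*} {l : List α}
    (h : ¬ l.Nodup) : ∃ l₁ a l₂ l₃, l = l₁ ++ a :: (l₂ ++ a :: l₃) := by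
  induction l with
  | nil => simp at h
  | cons b t ih =>
    by_cases hb : b ∈ t
    · obtain ⟨l₂, l₃, rfl⟩ := List.append_of_mem hb
      exact ⟨[], b, l₂, l₃, rfl⟩
    · obtain ⟨l₁, a, l₂, l₃, rfl⟩ := ih (by simp_all)
      exact ⟨b :: l₁, a, l₂, l₃, rfl⟩

namespace Slicing

section

variable {V : Type}

namespace IsPath

variable {succ : V → V → Prop} {p : List V} {v w : V}

theorem head_mem (h : IsPath succ p v w) : v ∈ p :=
  List.mem_of_mem_head? h.2.1

theorem getLast_mem (h : IsPath succ p v w) : w ∈ p :=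
  List.mem_of_getLast? h.2.2

theorem split {l₁ l₂ : List V} {a : V} (h : IsPath succ (l₁ ++ a :: l₂) v w) :
    IsPath succ (l₁ ++ [a]) v a ∧ IsPath succ (a :: l₂) a w := by
  obtain ⟨hc, hv, hw⟩ := h
  refine ⟨⟨hc.prefix ⟨l₂, by simp⟩, ?_, by simp⟩, ⟨hc.suffix ⟨l₁, rfl⟩, rfl, ?_⟩⟩
  · rw [List.head?_append] at hv ⊢
    cases l₁ <;> simpa using hv
  · rwa [List.getLast?_append_cons] at hw

theorem append {q : List V} {u : V} (hp : IsPath succ p v w) (hq : IsPath succ q w u) :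
    IsPath succ (p ++ q.tail) v u := by
  obtain ⟨p', rfl⟩ := List.getLast?_eq_some_iff.mp hp.2.2
  obtain ⟨t, rfl⟩ := List.head?_eq_some_iff.mp hq.2.1
  refine ⟨hp.1.append_overlap hq.1 (List.cons_ne_nil w []), ?_, ?_⟩
  · simpa using hp.2.1
  · simpa [List.getLast?_append_cons] using hq.2.2

theorem exists_prefix_first {u : V} (h : IsPath succ p v w) (hu : u ∈ p) :
    ∃ l, IsPath succ (l ++ [u]) v u ∧ u ∉ l ∧ l ++ [u] <+: p := by
  obtain ⟨l₁, l₂, rfl, hl₁⟩ := List.eq_append_cons_of_mem hu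
  exact ⟨l₁, (split h).1, hl₁, ⟨l₂, by simp⟩⟩

theorem exists_nodup_subset (h : IsPath succ p v w) :
    ∃ q, IsPath succ q v w ∧ q.Nodup ∧ q ⊆ p := by
  induction hn : p.length using Nat.strong_induction_on generalizing p with
  | _ n ih =>
  by_cases hnd : p.Nodup
  · exact ⟨p, h, hnd, List.Subset.refl p⟩
  obtain ⟨l₁, a, l₂, l₃, rfl⟩ := List.exists_eq_append_cons_append_cons_of_not_nodup hnd
  have hfirst := (split h).1
  have hlast := (split (l₁ := l₁ ++ a :: l₂) (by simpa using h)).2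
  have hshort : IsPath succ (l₁ ++ a :: l₃) v w := by simpa using hfirst.append hlast
  obtain ⟨q, hq, hqnd, hqsub⟩ := ih _ (by simp only [List.length_append, List.length_cons] at hn ⊢; omega) hshort rfl
  exact ⟨q, hq, hqnd, List.Subset.trans hqsub fun x hx => by
    simp only [List.mem_append, List.mem_cons] at hx ⊢
    tauto⟩

end IsPath

variable {Var : Type} {G : CFG V} {Def Use : V → Set Var} {Q : Set V}

theorem mem_rv_of_isPath {x : Var} {v t : V} {p : List V} (ht : t ∈ Q) (hx : x ∈ Use t)
    (hp : IsPath G.succ p v t) (hclear : ∀ w ∈ p, w ≠ t → x ∉ Def w) :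
    x ∈ rv G Def Use Q v := by
  obtain ⟨q, hq, hqnd, hqp⟩ := hp.exists_nodup_subset
  exact ⟨t, ht, hx, q, hq, hqnd, fun w hw => hclear w (hqp hw)⟩

theorem exists_dataDep_of_isPath {x : Var} {a t : V} {r : List V}
    (hr : IsPath G.succ r a t) (hx : x ∈ Use t) (hdef : ∃ w ∈ r, w ≠ t ∧ x ∈ Def w) :
    ∃ u ∈ r, u ≠ t ∧ x ∈ Def u ∧ DataDep G Def Use u t := by
  induction r generalizing a with
  | nil => simp at hdef
  | cons b r ih =>
    obtain rfl : b = a := by simpa using hr.2.1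
    by_cases hlater : ∃ w ∈ r, w ≠ t ∧ x ∈ Def w
    · obtain ⟨c, r', rfl⟩ := List.exists_cons_of_ne_nil (l := r) (by rintro rfl; simp at hlater)
      obtain ⟨u, hu, hut, hxu, hdd⟩ := ih (IsPath.split (l₁ := [b]) hr).2 hlater
      exact ⟨u, List.mem_cons_of_mem b hu, hut, hxu, hdd⟩
    push Not at hlater
    obtain ⟨w, hw, hwt, hxw⟩ := hdef
    obtain rfl : w = b := by
      rcases List.mem_cons.mp hw with rfl | hw
      · rfl
      · exact absurd hxw (hlater w hw hwt)
    have htr : t ∈ r := by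
      simpa [Ne.symm hwt] using hr.getLast_mem
    obtain ⟨l₁, l₂, rfl, htl₁⟩ := List.eq_append_cons_of_mem htr
    refine ⟨w, List.mem_cons_self, hwt, hxw, x, hx, hxw, w :: l₁ ++ [t],
      (IsPath.split (l₁ := w :: l₁) hr).1, by simp, fun u hu => ?_⟩
    simp only [List.cons_append, List.tail_cons, List.dropLast_concat] at hu
    exact hlater u (by simp [hu]) (by rintro rfl; exact htl₁ hu)

variable {v v' : V}

theorem mem_of_isPath_of_staysOutside {t : V} {p : List V} (hpd : PD G v v')
    (hso : StaysOutside G Q v v') (hp : IsPath G.succ p v t) (ht : t ∈ Q) : v' ∈ p := by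
  obtain ⟨e, he⟩ := G.reach_end t
  have hpe := hp.append he
  obtain ⟨l, hl, hv'l, hpre⟩ := hpe.exists_prefix_first (hpd _ hpe)
  rcases List.prefix_or_prefix_of_prefix (List.prefix_append p e.tail) hpre with h | h
  · obtain rfl := hso _ hl (by simpa using hv'l) t (h.subset hp.getLast_mem) ht
    exact hp.getLast_mem
  · exact h.subset (by simp)

theorem exists_isPath_of_staysOutside (hpd : PD G v v') (hso : StaysOutside G Q v v') :
    ∃ q, IsPath G.succ q v v' ∧ ∀ w ∈ q, w ∈ Q → w = v' := by
  obtain ⟨e, he⟩ := G.reach_end v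
  obtain ⟨l, hl, hv'l, -⟩ := he.exists_prefix_first (hpd e he)
  exact ⟨_, hl, hso _ hl (by simpa using hv'l)⟩

theorem rv_subset_of_staysOutside (hpd : PD G v v') (hso : StaysOutside G Q v v') :
    rv G Def Use Q v ⊆ rv G Def Use Q v' := by
  rintro x ⟨t, ht, hx, p, hp, -, hclear⟩
  obtain ⟨l₁, l₂, rfl⟩ := List.append_of_mem (mem_of_isPath_of_staysOutside hpd hso hp ht)
  exact mem_rv_of_isPath ht hx hp.split.2 fun w hw => hclear w (by simp [hw])

theorem rv_subset_of_staysOutside_of_closedDD (hpd : PD G v v') (hso : StaysOutside G Q v v')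
    (hcl : ClosedDD G Def Use Q) : rv G Def Use Q v' ⊆ rv G Def Use Q v := by
  rintro x ⟨t, ht, hx, p, hp, -, hclear⟩
  obtain ⟨q, hq, hqQ⟩ := exists_isPath_of_staysOutside hpd hso
  refine mem_rv_of_isPath ht hx (hq.append hp) ?_
  by_contra! hdef
  obtain ⟨u, hu, hut, hxu, hdd⟩ := exists_dataDep_of_isPath (hq.append hp) hx hdef
  have hup : u ∈ p := by
    rcases List.mem_append.mp hu with hu | hu
    · rw [hqQ u hu (hcl u t ht hdd)]
      exact hp.head_mem
    · exact List.mem_of_mem_tail hu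
  exact hclear u hup hut hxu

end

theorem rv_staysOutside_general {V Var : Type} (G : CFG V)
    (Def Use : V → Set Var) (Q : Set V) (v v' : V)
    (hpd : PD G v v') (hso : StaysOutside G Q v v')
    (hcl : ClosedDD G Def Use Q) :
    rv G Def Use Q v = rv G Def Use Q v' :=
  (rv_subset_of_staysOutside hpd hso).antisymm (rv_subset_of_staysOutside_of_closedDD hpd hso hcl)

/-- If `v'` postdominates `v`, `v` stays outside `Q` until `v'`, and `Q` is closed
under data dependence, then `rv(Q,v) = rv(Q,v')`. -/
theorem rv_staysOutside {V Var : Type} [Fintype V] (G : CFG V)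
    (Def Use : V → Set Var) (Q : Set V) (v v' : V)
    (hpd : PD G v v') (hso : StaysOutside G Q v v')
    (hcl : ClosedDD G Def Use Q) :
    rv G Def Use Q v = rv G Def Use Q v' :=
  rv_staysOutside_general G Def Use Q v v' hpd hso hcl

end Slicing
end
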